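/- arXiv:1401.4679 — 2 statements merged into one kernel-verified Lean document; each statement's English description precedes it below -/
import Mathlib

section
/- (Hadamard–Fisher inequality) For a positive semidefinite Hermitian matrix A ∈ M_m and any two index sets α, β ⊆ {1,...,m}, det(A_{α∪β}) · det(A_{α∩β}) ≤ det(A_α) · det(A_β), where A_γ denotes the principal submatrix with rows and columns indexed by γ. -/
open Matrix
open scoped ComplexOrder

/-!
Let `S` be the Schur complement of the block `A_{α∩β}`, extended by zero to all indices. For `γ`
disjoint from `α ∩ β` we have `det A_{(α∩β) ∪ γ} = det A_{α∩β} · det S_γ`, so the inequality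
becomes Fischer's inequality `det S_{P∪R} ≤ det S_P · det S_R` for the positive semidefinite `S`,
with `P = α \ β` and `R = β \ α`. Fischer's inequality is again the Schur complement formula,
combined with the monotonicity `det X ≤ det Y` for `0 ≤ X ≤ Y` in the Loewner order. Singular
blocks need no Schur complement: a positive semidefinite matrix with a singular principal
submatrix is itself singular.
-/

/-- The principal submatrix of `A` on the rows and columns indexed by the finite set `s`. -/
def principalSub {m : ℕ} (A : Matrix (Fin m) (Fin m) ℂ) (s : Finset (Fin m)) :
    Matrix {i // i ∈ s} {i // i ∈ s} ℂ :=
  A.submatrix Subtype.val Subtype.val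

namespace Matrix

theorem IsHermitian.submatrix_eq_conjTranspose_submatrix {α l o n : Type*} [Star α]
    {M : Matrix n n α} (hM : M.IsHermitian) (f : l → n) (g : o → n) :
    M.submatrix f g = (M.submatrix g f)ᴴ := by
  rw [conjTranspose_submatrix, hM.eq]

section DetMonotone

variable {𝕜 n : Type*} [RCLike 𝕜] [Fintype n] [DecidableEq n]

theorem PosSemidef.one_le_det_one_add {N : Matrix n n 𝕜} (hN : N.PosSemidef) :
    1 ≤ (1 + N).det := by
  have hcfc : 1 + N = cfc (fun x : ℝ => 1 + x) N := by
    have : IsSelfAdjoint N := hN.1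
    rw [cfc_add .., cfc_const_one .., cfc_id' ..]
  rw [hcfc, hN.1.cfc_eq]
  simp only [IsHermitian.cfc, det_map, det_diagonal, Function.comp_apply, map_add, map_one,
    RCLike.algebraMap_eq_ofReal]
  exact Finset.one_le_prod fun i _ =>
    le_add_of_nonneg_right (RCLike.ofReal_nonneg.2 (hN.eigenvalues_nonneg i))

open scoped MatrixOrder in
theorem PosSemidef.det_le_det {X Y : Matrix n n 𝕜} (hX : X.PosSemidef)
    (hXY : (Y - X).PosSemidef) : X.det ≤ Y.det := by
  by_cases hX₀ : X.det = 0
  · exact hX₀ ▸ (by simpa using hX.add hXY : Y.PosSemidef).det_nonneg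
  -- `Y = S (1 + N) S` with `S = √X` and `N = S⁻¹ (Y - X) S⁻¹ ⪰ 0`
  set S := CFC.sqrt X
  have hSS : S * S = X := CFC.sqrt_mul_sqrt_self X hX.nonneg
  have hSh : S.IsHermitian := (CFC.sqrt_nonneg X).posSemidef.1
  have hS : IsUnit S.det := (isUnit_iff_isUnit_det S).1 <|
    (CFC.isUnit_sqrt_iff X hX.nonneg).2 (hX.posDef_iff_det_ne_zero.2 hX₀).isUnit
  set N := S⁻¹ * (Y - X) * S⁻¹
  have hN : N.PosSemidef := by
    simpa only [hSh.inv.eq] using hXY.conjTranspose_mul_mul_same S⁻¹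
  have hY : Y = S * (1 + N) * S := by
    rw [mul_add, add_mul, mul_one, hSS, ← mul_assoc, ← mul_assoc, mul_nonsing_inv _ hS, one_mul,
      mul_assoc, nonsing_inv_mul _ hS, mul_one, add_sub_cancel]
  calc X.det = X.det * 1 := (mul_one _).symm
    _ ≤ X.det * (1 + N).det := mul_le_mul_of_nonneg_left hN.one_le_det_one_add hX.det_nonneg
    _ = Y.det := by rw [hY, det_mul, det_mul, ← hSS, det_mul]; ring

end DetMonotone

section PrincipalSubmatrix

variable {R 𝕜 n : Type*} [CommRing R] [RCLike 𝕜] [DecidableEq n]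

local notation:max M:max "⟦" s "⟧" =>
  Matrix.submatrix M (Subtype.val : {x // x ∈ s} → _) (Subtype.val : {x // x ∈ s} → _)

/-- The Schur complement of the block `M⟦s⟧`, extended to all of `n` (it vanishes on `s`), so
that its principal submatrices are the Schur complements of `M⟦s⟧` in the larger blocks. -/
noncomputable def schurCompl (M : Matrix n n R) (s : Finset n) : Matrix n n R :=
  M - M.submatrix id (Subtype.val : s → n) * (M⟦s⟧)⁻¹ * M.submatrix Subtype.val id

theorem det_submatrix_union_eq_mul_schurCompl {M : Matrix n n R} {s t : Finset n}
    (hst : Disjoint s t) (hs : IsUnit (M⟦s⟧).det) :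
    (M⟦s ∪ t⟧).det = (M⟦s⟧).det * ((schurCompl M s)⟦t⟧).det := by
  have := M⟦s⟧.invertibleOfIsUnitDet hs
  have hblocks : (M⟦s ∪ t⟧).submatrix (Equiv.Finset.union s t hst) (Equiv.Finset.union s t hst) =
      fromBlocks M⟦s⟧ (M.submatrix (Subtype.val : s → n) (Subtype.val : t → n))
        (M.submatrix (Subtype.val : t → n) (Subtype.val : s → n)) M⟦t⟧ := by
    ext (i | i) (j | j) <;> rfl
  rw [← det_submatrix_equiv_self (Equiv.Finset.union s t hst), hblocks, det_fromBlocks₁₁,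
    invOf_eq_nonsing_inv]
  rfl

variable {M : Matrix n n 𝕜} {s t : Finset n}

theorem PosSemidef.det_submatrix_eq_zero_of_subset (hM : M.PosSemidef) (hst : s ⊆ t)
    (hs : (M⟦s⟧).det = 0) : (M⟦t⟧).det = 0 := by
  by_contra ht
  have hpd : (M⟦t⟧).PosDef := (hM.submatrix _).posDef_iff_det_ne_zero.2 ht
  exact (hpd.submatrix (Subtype.impEmbedding _ _ hst).injective).det_pos.ne' hs

variable [Finite n]

theorem IsHermitian.posSemidef_sub_schurCompl (hM : M.IsHermitian) (hs : (M⟦s⟧).PosDef) :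
    (M - schurCompl M s).PosSemidef := by
  rw [schurCompl, sub_sub_cancel,
    hM.submatrix_eq_conjTranspose_submatrix id (Subtype.val : s → n)]
  exact hs.inv.posSemidef.conjTranspose_mul_mul_same _

theorem posSemidef_schurCompl (hM : M.PosSemidef) (hs : (M⟦s⟧).PosDef) :
    (schurCompl M s).PosSemidef := by
  have := M⟦s⟧.invertibleOfIsUnitDet hs.det_pos.ne'.isUnit
  have hB := hM.1.submatrix_eq_conjTranspose_submatrix id (Subtype.val : s → n)
  -- reading `M` along the non-injective `s ⊕ n → n`, `schurCompl M s` is a genuine Schur complement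
  have hblocks : M.submatrix (Sum.elim Subtype.val id) (Sum.elim Subtype.val id) =
      fromBlocks M⟦s⟧ (M.submatrix Subtype.val id) (M.submatrix Subtype.val id)ᴴ M := by
    rw [← hB]; ext (i | i) (j | j) <;> rfl
  rw [schurCompl, hB]
  exact (PosDef.fromBlocks₁₁ _ _ hs).1 (hblocks ▸ hM.submatrix _)

theorem PosSemidef.det_submatrix_union_le (hM : M.PosSemidef) (hst : Disjoint s t) :
    (M⟦s ∪ t⟧).det ≤ (M⟦s⟧).det * (M⟦t⟧).det := by
  by_cases hs : (M⟦s⟧).det = 0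
  · rw [hM.det_submatrix_eq_zero_of_subset Finset.subset_union_left hs, hs, zero_mul]
  have hspd : (M⟦s⟧).PosDef := (hM.submatrix _).posDef_iff_det_ne_zero.2 hs
  rw [det_submatrix_union_eq_mul_schurCompl hst (isUnit_iff_ne_zero.2 hs)]
  exact mul_le_mul_of_nonneg_left
    (((posSemidef_schurCompl hM hspd).submatrix _).det_le_det
      ((hM.1.posSemidef_sub_schurCompl hspd).submatrix _))
    (hM.submatrix _).det_nonneg

theorem PosSemidef.det_submatrix_union_union_mul_le (hM : M.PosSemidef) {q p r : Finset n}
    (hqp : Disjoint q p) (hqr : Disjoint q r) (hpr : Disjoint p r) :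
    (M⟦q ∪ (p ∪ r)⟧).det * (M⟦q⟧).det ≤ (M⟦q ∪ p⟧).det * (M⟦q ∪ r⟧).det := by
  have hdet_nonneg : ∀ s : Finset n, 0 ≤ (M⟦s⟧).det := fun s => (hM.submatrix _).det_nonneg
  by_cases hq : (M⟦q⟧).det = 0
  · rw [hq, mul_zero]
    exact mul_nonneg (hdet_nonneg _) (hdet_nonneg _)
  have hqpd : (M⟦q⟧).PosDef := (hM.submatrix _).posDef_iff_det_ne_zero.2 hq
  have hq' : IsUnit (M⟦q⟧).det := isUnit_iff_ne_zero.2 hq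
  rw [det_submatrix_union_eq_mul_schurCompl hqp hq', det_submatrix_union_eq_mul_schurCompl hqr hq',
    det_submatrix_union_eq_mul_schurCompl (Finset.disjoint_union_right.2 ⟨hqp, hqr⟩) hq']
  have hfischer := (posSemidef_schurCompl hM hqpd).det_submatrix_union_le hpr
  calc _ = (M⟦q⟧).det * (M⟦q⟧).det * ((schurCompl M q)⟦p ∪ r⟧).det := by ring
    _ ≤ (M⟦q⟧).det * (M⟦q⟧).det * (((schurCompl M q)⟦p⟧).det * ((schurCompl M q)⟦r⟧).det) :=
      mul_le_mul_of_nonneg_left hfischer (mul_nonneg (hdet_nonneg q) (hdet_nonneg q))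
    _ = _ := by ring

theorem PosSemidef.det_submatrix_union_mul_inter_le (hM : M.PosSemidef) (s t : Finset n) :
    (M⟦s ∪ t⟧).det * (M⟦s ∩ t⟧).det ≤ (M⟦s⟧).det * (M⟦t⟧).det := by
  have h := hM.det_submatrix_union_union_mul_le (q := s ∩ t) (p := s \ t) (r := t \ s)
    (Finset.disjoint_sdiff.mono_left Finset.inter_subset_right)
    (Finset.disjoint_sdiff.mono_left Finset.inter_subset_left) disjoint_sdiff_sdiff
  have hs : s ∩ t ∪ s \ t = s := by rw [Finset.union_comm, Finset.sdiff_union_inter]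
  have ht : s ∩ t ∪ t \ s = t := by
    rw [Finset.inter_comm, Finset.union_comm, Finset.sdiff_union_inter]
  have hst : s ∩ t ∪ (s \ t ∪ t \ s) = s ∪ t := by
    rw [← Finset.union_assoc, hs, Finset.union_sdiff_self_eq_union]
  rwa [hs, ht, hst] at h

end PrincipalSubmatrix

end Matrix

/-- Hadamard–Fisher inequality: for a positive semidefinite Hermitian `m × m` matrix `A`
and index sets `α, β ⊆ {1,…,m}`,
`det(A_{α∪β}) · det(A_{α∩β}) ≤ det(A_α) · det(A_β)`.
(The determinants of Hermitian principal submatrices are real, so the inequality is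
stated between their real parts.) -/
theorem hadamard_fisher {m : ℕ} (A : Matrix (Fin m) (Fin m) ℂ)
    (hA : A.PosSemidef) (α β : Finset (Fin m)) :
    ((principalSub A (α ∪ β)).det).re * ((principalSub A (α ∩ β)).det).re ≤
      ((principalSub A α).det).re * ((principalSub A β).det).re := by
  have hreal : ∀ s, (principalSub A s).det = ((principalSub A s).det.re : ℂ) := fun s =>
    Complex.eq_re_of_ofReal_le (r := 0) (by exact_mod_cast (hA.submatrix _).det_nonneg)
  have h : (principalSub A (α ∪ β)).det * (principalSub A (α ∩ β)).det ≤
      (principalSub A α).det * (principalSub A β).det :=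
    hA.det_submatrix_union_mul_inter_le α β
  rw [hreal (α ∪ β), hreal (α ∩ β), hreal α, hreal β] at h
  exact_mod_cast h
end

section
/- If σ is a real symmetric 2N×2N matrix satisfying σ + iΩ ≥ 0 (as a Hermitian matrix), then σ is positive definite (σ > 0). -/
/-!
For real `x`, the quadratic form of `σ + iΩ` at `x` is `xᵀσx + i xᵀΩx = xᵀσx`, because `Ω` is
antisymmetric; so `σ ≥ 0`. If `xᵀσx = 0`, then `x` lies in the kernel of the positive
semidefinite matrix `σ + iΩ`, and the imaginary part of `(σ + iΩ)x = 0` reads `Ωx = 0`, which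
forces `x = 0` since `Ω = 1 ⊗ [[0,1],[-1,0]]` has determinant `1`.
-/

open Matrix
open scoped ComplexOrder
/-- The standard `2N × 2N` symplectic form: block diagonal with `N` blocks `[[0,1],[-1,0]]`. -/
def Omega (N : ℕ) : Matrix (Fin N × Fin 2) (Fin N × Fin 2) ℝ :=
  fun p q => if p.1 = q.1 then !![0, 1; -1, 0] p.2 q.2 else 0

open Complex
open scoped Kronecker

section

variable {n : Type*} [Fintype n]

lemma dotProduct_mulVec_self_eq_zero_of_transpose_eq_neg {A : Matrix n n ℝ} (hA : Aᵀ = -A)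
    (x : n → ℝ) : x ⬝ᵥ A *ᵥ x = 0 := by
  have h : x ⬝ᵥ A *ᵥ x = -(x ⬝ᵥ A *ᵥ x) :=
    calc x ⬝ᵥ A *ᵥ x = x ⬝ᵥ Aᵀ *ᵥ x := by
          rw [dotProduct_mulVec, ← mulVec_transpose, dotProduct_comm]
      _ = -(x ⬝ᵥ A *ᵥ x) := by rw [hA, neg_mulVec, dotProduct_neg]
  linarith

lemma of_add_I_mul_mulVec_ofReal (S A : Matrix n n ℝ) (x : n → ℝ) :
    (of fun p q => (S p q : ℂ) + I * A p q) *ᵥ (fun p => (x p : ℂ)) =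
      fun p => ((S *ᵥ x) p : ℂ) + I * (A *ᵥ x) p := by
  ext p
  simp only [mulVec, dotProduct, of_apply, ofReal_sum, ofReal_mul, Finset.mul_sum,
    ← Finset.sum_add_distrib]
  exact Finset.sum_congr rfl fun q _ => by ring

lemma star_ofReal_dotProduct_of_add_I_mul_mulVec (S A : Matrix n n ℝ) (x : n → ℝ) :
    star (fun p => (x p : ℂ)) ⬝ᵥ (of fun p q => (S p q : ℂ) + I * A p q) *ᵥ (fun p => (x p : ℂ)) =
      (x ⬝ᵥ S *ᵥ x : ℝ) + I * (x ⬝ᵥ A *ᵥ x : ℝ) := by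
  rw [of_add_I_mul_mulVec_ofReal]
  simp only [dotProduct, Pi.star_apply, RCLike.star_def, conj_ofReal, ofReal_sum, ofReal_mul,
    Finset.mul_sum, ← Finset.sum_add_distrib]
  exact Finset.sum_congr rfl fun q _ => by ring

theorem posDef_of_posSemidef_of_add_I_mul [DecidableEq n] {S A : Matrix n n ℝ} (hS : Sᵀ = S)
    (hA : Aᵀ = -A) (hA_unit : IsUnit A)
    (h : (of fun p q => (S p q : ℂ) + I * A p q).PosSemidef) : S.PosDef := by
  refine posDef_iff_dotProduct_mulVec.mpr ⟨hS, fun x hx => ?_⟩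
  set z : n → ℂ := fun p => (x p : ℂ)
  have hquad : star z ⬝ᵥ (of fun p q => (S p q : ℂ) + I * A p q) *ᵥ z = (x ⬝ᵥ S *ᵥ x : ℝ) := by
    rw [star_ofReal_dotProduct_of_add_I_mul_mulVec,
      dotProduct_mulVec_self_eq_zero_of_transpose_eq_neg hA, ofReal_zero, mul_zero, add_zero]
  have hnonneg : 0 ≤ x ⬝ᵥ S *ᵥ x := by
    exact_mod_cast hquad ▸ h.dotProduct_mulVec_nonneg z
  rw [star_trivial]
  refine hnonneg.lt_of_ne fun hzero => hx ?_
  have hMz := (h.dotProduct_mulVec_zero_iff z).mp (by rw [hquad, ← hzero, ofReal_zero])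
  have hAx : A *ᵥ x = 0 := by
    funext p
    simpa [z, of_add_I_mul_mulVec_ofReal] using congrArg (fun v => (v p).im) hMz
  exact mulVec_injective_of_isUnit hA_unit (by rw [hAx, mulVec_zero])

end

lemma Omega_eq_one_kronecker (N : ℕ) : Omega N = 1 ⊗ₖ !![0, 1; -1, 0] := by
  ext ⟨i, a⟩ ⟨j, b⟩
  by_cases hij : i = j <;> simp [Omega, one_apply, hij]

lemma Omega_transpose (N : ℕ) : (Omega N)ᵀ = -Omega N := by
  have hJ : (!![0, 1; -1, 0] : Matrix (Fin 2) (Fin 2) ℝ)ᵀ = (-1 : ℝ) • !![0, 1; -1, 0] := by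
    ext i j
    fin_cases i <;> fin_cases j <;> simp
  rw [Omega_eq_one_kronecker, ← kroneckerMap_transpose, transpose_one, hJ, kronecker_smul,
    neg_one_smul]

lemma isUnit_Omega (N : ℕ) : IsUnit (Omega N) := by
  rw [isUnit_iff_isUnit_det, Omega_eq_one_kronecker, det_kronecker]
  simp [det_fin_two_of]

/-- If a real symmetric `2N × 2N` matrix `σ` satisfies the bona fide condition
`σ + iΩ ≥ 0` (as a Hermitian matrix), then `σ` is positive definite. -/
theorem bona_fide_implies_posdef {N : ℕ}
    (σ : Matrix (Fin N × Fin 2) (Fin N × Fin 2) ℝ) (hsym : σᵀ = σ)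
    (h : (Matrix.of (fun p q => (σ p q : ℂ) + Complex.I * (Omega N p q : ℂ))).PosSemidef) :
    σ.PosDef :=
  posDef_of_posSemidef_of_add_I_mul hsym (Omega_transpose N) (isUnit_Omega N) h
end
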